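/- arXiv:2311.15229 — 2 statements merged into one kernel-verified Lean document; each statement's English description precedes it below -/
import Mathlib

section
/- Fix a real number q > 1 and a sign ε ∈ {+1,−1}. The (q,ε)-residue function is injective on charged partitions: if O^{(q,ε)}_{|λ,s⟩}(u) = O^{(q,ε)}_{|λ′,s′⟩}(u) in ℝ(u), then λ = λ′ and s = s′. -/
/-!
For a real number `q > 1` and a sign `ε ∈ {+1, -1}`, the `(q,ε)`-residue function
`O^{(q,ε)}_{|λ,s⟩}(u) = (∏_{b addable} (u - ε·q^{cont^s b})) / (∏_{b removable} (u - ε·q^{cont^s b}))`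
is injective on charged partitions.
-/

open scoped Classical

noncomputable section

/-- A box `c` is addable for the Young diagram `μ`. -/
def IsAddable (μ : YoungDiagram) (c : ℕ × ℕ) : Prop :=
  c ∉ μ ∧ IsLowerSet (insert c (μ.cells : Set (ℕ × ℕ)))

/-- A box `c` is removable for the Young diagram `μ`. -/
def IsRemovable (μ : YoungDiagram) (c : ℕ × ℕ) : Prop :=
  c ∈ μ ∧ IsLowerSet ((μ.cells : Set (ℕ × ℕ)) \ {c})

/-- The `s`-shifted content of a box `c = (i, j)` is `s + j - i`. -/
def cont (s : ℤ) (c : ℕ × ℕ) : ℤ := s + (c.2 : ℤ) - (c.1 : ℤ)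

/-- The `(q, ε)`-residue function of the charged partition `|μ, s⟩`, as an element of `ℝ(u)`. -/
def residueFun (q ε : ℝ) (μ : YoungDiagram) (s : ℤ) : RatFunc ℝ :=
  (∏ᶠ c ∈ {c | IsAddable μ c}, (RatFunc.X - RatFunc.C (ε * q ^ (cont s c)))) /
    (∏ᶠ c ∈ {c | IsRemovable μ c}, (RatFunc.X - RatFunc.C (ε * q ^ (cont s c))))

/-!
Write `B ⊆ ℤ` for the Maya diagram `{s + λᵢ - i}` of `|λ, s⟩`. The addable boxes have the
contents `x ∈ B` with `x + 1 ∉ B`, the removable boxes the contents `x ∉ B` with `x + 1 ∈ B`,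
and distinct addable (resp. removable) boxes have distinct contents. Since `n ↦ ε qⁿ` is
injective, the residue function is a quotient of products of distinct linear factors whose
root sets are disjoint, so it determines both boundary sets of `B`. As `B` is bounded above,
its boundary determines `B` by descending induction, and `B` determines `(λ, s)` because
`i ↦ s + λᵢ - i` is strictly decreasing.
-/

namespace Finset

theorem eq_and_eq_of_val_add_eq_of_disjoint {α : Type*} {A R A' R' : Finset α}
    (hAR : Disjoint A R) (hAR' : Disjoint A' R') (h : A.val + R'.val = A'.val + R.val) :
    A = A' ∧ R = R' := by
  have hmem : ∀ x, x ∈ A ∨ x ∈ R' ↔ x ∈ A' ∨ x ∈ R := fun x => by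
    simpa only [Multiset.mem_add, mem_val] using (congrArg (x ∈ ·) h).to_iff
  have hA : A = A' := by
    ext x
    constructor
    · exact fun hx => ((hmem x).1 (.inl hx)).resolve_right (disjoint_left.1 hAR hx)
    · exact fun hx => ((hmem x).2 (.inl hx)).resolve_right (disjoint_left.1 hAR' hx)
  subst hA
  exact ⟨rfl, (val_injective (add_left_cancel h)).symm⟩

end Finset

namespace RatFunc

open Polynomial in
theorem eq_of_finprod_X_sub_C_div_eq {K : Type*} [Field K] {A R A' R' : Set K}
    (hA : A.Finite) (hR : R.Finite) (hA' : A'.Finite) (hR' : R'.Finite)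
    (hAR : Disjoint A R) (hAR' : Disjoint A' R')
    (h : (∏ᶠ a ∈ A, (RatFunc.X - RatFunc.C a)) / (∏ᶠ r ∈ R, (RatFunc.X - RatFunc.C r)) =
      (∏ᶠ a ∈ A', (RatFunc.X - RatFunc.C a)) / (∏ᶠ r ∈ R', (RatFunc.X - RatFunc.C r))) :
    A = A' ∧ R = R' := by
  obtain ⟨A, rfl⟩ := hA.exists_finset_coe
  obtain ⟨R, rfl⟩ := hR.exists_finset_coe
  obtain ⟨A', rfl⟩ := hA'.exists_finset_coe
  obtain ⟨R', rfl⟩ := hR'.exists_finset_coe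
  set P : Finset K → K[X] := fun T => ∏ a ∈ T, (Polynomial.X - Polynomial.C a) with hP
  have hP_ne : ∀ T, P T ≠ 0 := fun T =>
    (monic_prod_of_monic _ _ fun a _ => monic_X_sub_C a).ne_zero
  have hcoe : ∀ T : Finset K, ∏ᶠ a ∈ (T : Set K), (RatFunc.X - RatFunc.C a) =
      algebraMap K[X] (RatFunc K) (P T) := fun T => by
    simp only [finprod_mem_coe_finset, hP, map_prod, map_sub, algebraMap_X, algebraMap_C]
  simp only [hcoe] at h
  rw [div_eq_div_iff (RatFunc.algebraMap_ne_zero (hP_ne R))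
    (RatFunc.algebraMap_ne_zero (hP_ne R')), ← map_mul, ← map_mul] at h
  have hroots := congrArg roots (RatFunc.algebraMap_injective K h)
  rw [roots_mul (mul_ne_zero (hP_ne A) (hP_ne R')), roots_mul (mul_ne_zero (hP_ne A') (hP_ne R)),
    hP, roots_prod_X_sub_C, roots_prod_X_sub_C, roots_prod_X_sub_C, roots_prod_X_sub_C] at hroots
  obtain ⟨rfl, rfl⟩ := Finset.eq_and_eq_of_val_add_eq_of_disjoint (Finset.disjoint_coe.1 hAR)
    (Finset.disjoint_coe.1 hAR') hroots
  exact ⟨rfl, rfl⟩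

end RatFunc

namespace Set

variable (B : Set ℤ)

def runEnds : Set ℤ := {x | x ∈ B ∧ x + 1 ∉ B}

def gapEnds : Set ℤ := {x | x ∉ B ∧ x + 1 ∈ B}

variable {B}

theorem disjoint_runEnds_gapEnds : Disjoint (runEnds B) (gapEnds B) :=
  Set.disjoint_left.2 fun _ ha hr => hr.1 ha.1

theorem eq_of_runEnds_eq_of_gapEnds_eq {B' : Set ℤ} (hB : BddAbove B) (hB' : BddAbove B')
    (hrun : runEnds B = runEnds B') (hgap : gapEnds B = gapEnds B') : B = B' := by
  by_contra hne
  obtain ⟨b, hb⟩ := hB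
  obtain ⟨b', hb'⟩ := hB'
  -- the largest integer on which `B` and `B'` disagree
  obtain ⟨x, hx, hmax⟩ := Int.exists_greatest_of_bdd (P := fun x => ¬(x ∈ B ↔ x ∈ B'))
    ⟨max b b', fun z hz => by
      by_cases h : z ∈ B
      · exact le_max_of_le_left (hb h)
      · exact le_max_of_le_right (hb' (by tauto))⟩
    (by simpa [Set.ext_iff] using hne)
  have hsucc : x + 1 ∈ B ↔ x + 1 ∈ B' := not_not.1 fun h => by linarith [hmax _ h]
  have hrunx := congrArg (x ∈ ·) hrun
  have hgapx := congrArg (x ∈ ·) hgap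
  simp only [runEnds, gapEnds, Set.mem_ofPred_eq, eq_iff_iff] at hrunx hgapx
  tauto

end Set

section LowerSet

variable {α : Type*} [PartialOrder α] {s : Set α} {a : α}

theorem IsLowerSet.isLowerSet_insert_iff (hs : IsLowerSet s) :
    IsLowerSet (insert a s) ↔ ∀ b < a, b ∈ s := by
  refine ⟨fun h b hba => (h hba.le (Set.mem_insert a s)).resolve_left hba.ne, fun h => ?_⟩
  rintro c b hbc (rfl | hc)
  · rcases hbc.lt_or_eq with hbc | rfl
    · exact Or.inr (h b hbc)
    · exact Set.mem_insert _ _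
  · exact Or.inr (hs hbc hc)

theorem IsLowerSet.isLowerSet_diff_singleton_iff (hs : IsLowerSet s) :
    IsLowerSet (s \ {a}) ↔ ∀ b ∈ s, ¬a < b := by
  refine ⟨fun h b hb hab => (h hab.le ⟨hb, hab.ne'⟩).2 rfl, fun h => ?_⟩
  exact hs.erase fun b hb hab => (hab.lt_or_eq.resolve_left (h b hb)).symm

end LowerSet

namespace StrictAnti

variable {f : ℕ → ℤ}

theorem sub_one_mem_range_iff (hf : StrictAnti f) (i : ℕ) :
    f i - 1 ∈ Set.range f ↔ f (i + 1) = f i - 1 := by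
  refine ⟨fun ⟨j, hj⟩ => ?_, fun h => ⟨i + 1, h⟩⟩
  have hij : i < j := hf.lt_iff_gt.1 (by omega)
  have hle : f j ≤ f (i + 1) := hf.antitone hij
  have hlt : f (i + 1) < f i := hf i.lt_succ_self
  omega

theorem add_one_mem_range_iff (hf : StrictAnti f) (i : ℕ) :
    f i + 1 ∈ Set.range f ↔ i ≠ 0 ∧ f (i - 1) = f i + 1 := by
  refine ⟨fun ⟨j, hj⟩ => ?_, fun ⟨_, h⟩ => ⟨i - 1, h⟩⟩
  have hsucc := (hf.sub_one_mem_range_iff j).1 ⟨i, by omega⟩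
  obtain rfl : j + 1 = i := hf.injective (by omega)
  exact ⟨j.succ_ne_zero, hj⟩

end StrictAnti

namespace YoungDiagram

variable (μ : YoungDiagram) (s : ℤ)

def betaNumber (i : ℕ) : ℤ := s + μ.rowLen i - i

def mayaDiagram : Set ℤ := Set.range (μ.betaNumber s)

variable {μ s}

theorem rowLen_eq_zero {i : ℕ} (hi : μ.colLen 0 ≤ i) : μ.rowLen i = 0 := by
  by_contra hne
  have := mem_iff_lt_colLen.1 (mem_iff_lt_rowLen.2 (Nat.pos_of_ne_zero hne))
  omega

theorem betaNumber_strictAnti : StrictAnti (μ.betaNumber s) :=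
  strictAnti_nat_of_succ_lt fun i => by
    have := μ.rowLen_anti i (i + 1) i.le_succ
    simp only [betaNumber]
    push_cast
    omega

theorem bddAbove_mayaDiagram : BddAbove (μ.mayaDiagram s) :=
  ⟨μ.betaNumber s 0, by rintro _ ⟨i, rfl⟩; exact betaNumber_strictAnti.antitone i.zero_le⟩

theorem eq_of_betaNumber_eq {μ' : YoungDiagram} {s' : ℤ}
    (h : μ.betaNumber s = μ'.betaNumber s') : μ = μ' ∧ s = s' := by
  have hN := congrFun h (max (μ.colLen 0) (μ'.colLen 0))
  simp only [betaNumber, rowLen_eq_zero (le_max_left _ _),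
    rowLen_eq_zero (le_max_right _ _)] at hN
  obtain rfl : s = s' := by omega
  have hrow : ∀ i, μ.rowLen i = μ'.rowLen i := fun i => by
    have := congrFun h i
    simp only [betaNumber] at this
    omega
  refine ⟨?_, rfl⟩
  ext ⟨i, j⟩
  simp only [mem_cells, mem_iff_lt_rowLen, hrow]

theorem eq_of_mayaDiagram_eq {μ' : YoungDiagram} {s' : ℤ}
    (h : μ.mayaDiagram s = μ'.mayaDiagram s') : μ = μ' ∧ s = s' := by
  refine eq_of_betaNumber_eq (neg_injective.comp_left ?_)
  refine (betaNumber_strictAnti.neg.range_inj betaNumber_strictAnti.neg).1 ?_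
  simp only [mayaDiagram] at h
  change Set.range (Neg.neg ∘ _) = Set.range (Neg.neg ∘ _)
  rw [Set.range_comp, Set.range_comp, h]

theorem isAddable_iff {i j : ℕ} :
    IsAddable μ (i, j) ↔ j = μ.rowLen i ∧ (i = 0 ∨ μ.rowLen i < μ.rowLen (i - 1)) := by
  rw [IsAddable, μ.isLowerSet.isLowerSet_insert_iff]
  simp only [Prod.forall, Prod.mk_lt_mk, Finset.mem_coe, mem_cells, mem_iff_lt_rowLen, not_lt]
  constructor
  · rintro ⟨hj, h⟩
    refine ⟨?_, ?_⟩
    · rcases j with _ | j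
      · omega
      · have := h i j (Or.inr ⟨le_rfl, j.lt_succ_self⟩)
        omega
    · rcases i with _ | i
      · exact Or.inl rfl
      · have := h i j (Or.inl ⟨i.lt_succ_self, le_rfl⟩)
        right
        simp only [Nat.add_sub_cancel]
        omega
  · rintro ⟨rfl, hi⟩
    refine ⟨le_rfl, fun a b hab => ?_⟩
    rcases hab with ⟨ha, hb⟩ | ⟨ha, hb⟩
    · have := μ.rowLen_anti a (i - 1) (by omega)
      omega
    · rcases ha.lt_or_eq with ha | rfl
      · have := μ.rowLen_anti a (i - 1) (by omega)
        omega
      · exact hb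

theorem isRemovable_iff {i j : ℕ} :
    IsRemovable μ (i, j) ↔ j + 1 = μ.rowLen i ∧ μ.rowLen (i + 1) < μ.rowLen i := by
  rw [IsRemovable, μ.isLowerSet.isLowerSet_diff_singleton_iff]
  simp only [Prod.forall, Prod.mk_lt_mk, Finset.mem_coe, mem_cells, mem_iff_lt_rowLen]
  constructor
  · rintro ⟨hj, h⟩
    have hright := h i (j + 1)
    have hbelow := h (i + 1) j
    omega
  · rintro ⟨hj, hi⟩
    refine ⟨by omega, fun a b hb hab => ?_⟩
    rcases hab with ⟨ha, hjb⟩ | ⟨ha, hjb⟩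
    · have := μ.rowLen_anti (i + 1) a ha
      omega
    · have := μ.rowLen_anti i a ha
      omega

theorem cont_of_isAddable {i j : ℕ} (hc : IsAddable μ (i, j)) :
    cont s (i, j) = μ.betaNumber s i := by
  simp only [cont, betaNumber, (isAddable_iff.1 hc).1]

theorem cont_of_isRemovable {i j : ℕ} (hc : IsRemovable μ (i, j)) :
    cont s (i, j) = μ.betaNumber s i - 1 := by
  have := (isRemovable_iff.1 hc).1
  simp only [cont, betaNumber]
  omega

theorem cont_image_addable : cont s '' {c | IsAddable μ c} = (μ.mayaDiagram s).runEnds := by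
  ext x
  constructor
  · rintro ⟨⟨i, j⟩, hc, rfl⟩
    have hi := (isAddable_iff.1 hc).2
    rw [cont_of_isAddable hc]
    refine ⟨⟨i, rfl⟩, ?_⟩
    rw [mayaDiagram, betaNumber_strictAnti.add_one_mem_range_iff]
    simp only [betaNumber]
    omega
  · rintro ⟨⟨i, rfl⟩, hgap⟩
    rw [mayaDiagram, betaNumber_strictAnti.add_one_mem_range_iff] at hgap
    have hc : IsAddable μ (i, μ.rowLen i) := by
      have := μ.rowLen_anti (i - 1) i (by omega)
      simp only [betaNumber] at hgap
      exact isAddable_iff.2 ⟨rfl, by omega⟩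
    exact ⟨_, hc, cont_of_isAddable hc⟩

theorem cont_image_removable : cont s '' {c | IsRemovable μ c} = (μ.mayaDiagram s).gapEnds := by
  ext x
  constructor
  · rintro ⟨⟨i, j⟩, hc, rfl⟩
    have hi := (isRemovable_iff.1 hc).2
    rw [cont_of_isRemovable hc]
    refine ⟨?_, ⟨i, by ring⟩⟩
    rw [mayaDiagram, betaNumber_strictAnti.sub_one_mem_range_iff]
    simp only [betaNumber]
    omega
  · rintro ⟨hgap, ⟨i, hi⟩⟩
    obtain rfl : x = μ.betaNumber s i - 1 := by omega
    rw [mayaDiagram, betaNumber_strictAnti.sub_one_mem_range_iff] at hgap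
    have hc : IsRemovable μ (i, μ.rowLen i - 1) := by
      have := μ.rowLen_anti i (i + 1) (by omega)
      simp only [betaNumber] at hgap
      exact isRemovable_iff.2 ⟨by omega, by omega⟩
    exact ⟨_, hc, cont_of_isRemovable hc⟩

theorem cont_injOn_addable : Set.InjOn (cont s) {c | IsAddable μ c} := by
  rintro ⟨i, j⟩ hc ⟨i', j'⟩ hc' h
  rw [Set.mem_ofPred_eq] at hc hc'
  rw [cont_of_isAddable hc, cont_of_isAddable hc'] at h
  obtain rfl := betaNumber_strictAnti.injective h
  rw [(isAddable_iff.1 hc).1, (isAddable_iff.1 hc').1]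

theorem cont_injOn_removable : Set.InjOn (cont s) {c | IsRemovable μ c} := by
  rintro ⟨i, j⟩ hc ⟨i', j'⟩ hc' h
  rw [Set.mem_ofPred_eq] at hc hc'
  rw [cont_of_isRemovable hc, cont_of_isRemovable hc', sub_left_inj] at h
  obtain rfl := betaNumber_strictAnti.injective h
  have := (isRemovable_iff.1 hc).1
  have := (isRemovable_iff.1 hc').1
  congr 1
  omega

theorem finite_addable : {c | IsAddable μ c}.Finite := by
  refine ((Set.finite_Iic (μ.colLen 0)).image fun i => (i, μ.rowLen i)).subset ?_
  rintro ⟨i, j⟩ hc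
  obtain ⟨rfl, hi⟩ := isAddable_iff.1 hc
  refine ⟨i, Set.mem_Iic.2 (not_lt.1 fun hlt => ?_), rfl⟩
  have := rowLen_eq_zero (μ := μ) (i := i - 1) (by omega)
  omega

theorem finite_runEnds_mayaDiagram : (μ.mayaDiagram s).runEnds.Finite :=
  cont_image_addable ▸ finite_addable.image _

theorem finite_gapEnds_mayaDiagram : (μ.mayaDiagram s).gapEnds.Finite :=
  cont_image_removable ▸ (μ.cells.finite_toSet.subset fun _ hc => hc.1).image _

end YoungDiagram

open YoungDiagram

theorem residueFun_eq_finprod_div_finprod {q ε : ℝ}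
    (hE : Function.Injective fun n : ℤ => ε * q ^ n) (μ : YoungDiagram) (s : ℤ) :
    residueFun q ε μ s =
      (∏ᶠ a ∈ (fun n : ℤ => ε * q ^ n) '' (μ.mayaDiagram s).runEnds,
          (RatFunc.X - RatFunc.C a)) /
        ∏ᶠ a ∈ (fun n : ℤ => ε * q ^ n) '' (μ.mayaDiagram s).gapEnds,
          (RatFunc.X - RatFunc.C a) := by
  rw [residueFun, ← cont_image_addable, ← cont_image_removable, ← Set.image_comp,
    ← Set.image_comp, finprod_mem_image (hE.comp_injOn cont_injOn_addable),
    finprod_mem_image (hE.comp_injOn cont_injOn_removable)]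
  rfl

/-- The `(q,ε)`-residue function is injective on charged partitions. -/
theorem residueFun_injective (q ε : ℝ) (hq : 1 < q) (hε : ε = 1 ∨ ε = -1)
    (μ μ' : YoungDiagram) (s s' : ℤ)
    (h : residueFun q ε μ s = residueFun q ε μ' s') : μ = μ' ∧ s = s' := by
  set E : ℤ → ℝ := fun n => ε * q ^ n
  have hε₀ : ε ≠ 0 := by rcases hε with rfl | rfl <;> norm_num
  have hE : Function.Injective E := fun m n hmn =>
    zpow_right_injective₀ (by linarith) hq.ne' (mul_left_cancel₀ hε₀ hmn)
  rw [residueFun_eq_finprod_div_finprod hE, residueFun_eq_finprod_div_finprod hE] at h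
  obtain ⟨hrun, hgap⟩ := RatFunc.eq_of_finprod_X_sub_C_div_eq
    (finite_runEnds_mayaDiagram.image E) (finite_gapEnds_mayaDiagram.image E)
    (finite_runEnds_mayaDiagram.image E) (finite_gapEnds_mayaDiagram.image E)
    ((Set.disjoint_image_iff hE).2 Set.disjoint_runEnds_gapEnds)
    ((Set.disjoint_image_iff hE).2 Set.disjoint_runEnds_gapEnds) h
  exact eq_of_mayaDiagram_eq <| Set.eq_of_runEnds_eq_of_gapEnds_eq bddAbove_mayaDiagram
    bddAbove_mayaDiagram (hE.image_injective hrun) (hE.image_injective hgap)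

end
end

section
/- A symbol Λ is cuspidal — i.e. rank(Λ) = ⌊def(Λ)²/4⌋ — if and only if Λ is equivalent to (∅, ∅), or to ({k, k−1, …, 1, 0}, ∅) or to (∅, {k, k−1, …, 1, 0}) for some k ∈ ℕ. -/
/-!
A symbol Λ is cuspidal — i.e. `rank(Λ) = ⌊def(Λ)²/4⌋` — iff Λ is equivalent to `(∅, ∅)`,
or to `({k, k−1, …, 1, 0}, ∅)` or to `(∅, {k, k−1, …, 1, 0})` for some `k ∈ ℕ`.
-/

open scoped Classical

noncomputable section

/-- A symbol: an ordered pair of finite subsets of ℕ. -/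
abbrev LSymbol := Finset ℕ × Finset ℕ

/-- The `d`-shift of a beta-set. -/
def shiftSet (d : ℕ) (A : Finset ℕ) : Finset ℕ :=
  Finset.range d ∪ A.image (· + d)

/-- The `d`-shift of a symbol. -/
def dShift (d : ℕ) (Λ : LSymbol) : LSymbol := (shiftSet d Λ.1, shiftSet d Λ.2)

/-- Equivalence of symbols: the equivalence relation generated by `d`-shifts. -/
def SymbolEquiv : LSymbol → LSymbol → Prop :=
  Relation.EqvGen fun Λ Λ' => ∃ d : ℕ, Λ' = dShift d Λ

/-- The rank of a symbol:
`rank(Λ) = Σ_{a∈A} a + Σ_{b∈B} b − ⌊((|A|+|B|−1)/2)²⌋`. -/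
def symbolRank (Λ : LSymbol) : ℤ :=
  ((∑ a ∈ Λ.1, a : ℕ) : ℤ) + ((∑ b ∈ Λ.2, b : ℕ) : ℤ) -
    ((Λ.1.card : ℤ) + (Λ.2.card : ℤ) - 1) ^ 2 / 4

/-- The defect of a symbol: `def(Λ) = |A| − |B|`. -/
def symbolDefect (Λ : LSymbol) : ℤ := (Λ.1.card : ℤ) - (Λ.2.card : ℤ)

/-!
Write `T n = 0 + 1 + ⋯ + (n - 1)` and `‖A‖ = ∑ A - T #A`, the size of the partition with beta-set
`A`; `‖A‖ ≥ 0`, with equality exactly when `A = {0, …, #A - 1}`. Since `4 T a + 4 T b = x² + y² - 1`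
for `x = a + b - 1`, `y = a - b` of opposite parity, `T a + T b = ⌊x²/4⌋ + ⌊y²/4⌋`, whence
`rank (A, B) = ‖A‖ + ‖B‖ + ⌊def²/4⌋`. A `d`-shift preserves `‖·‖` and the defect, so cuspidality is
invariant under equivalence, and the cuspidal symbols are the pairs of initial segments
`({0, …, a - 1}, {0, …, b - 1})`: the `min a b`-shift of a symbol with an empty side.
-/

open Finset

lemma disjoint_range_image_add (d : ℕ) (A : Finset ℕ) : Disjoint (range d) (A.image (· + d)) := by
  simp only [disjoint_left, mem_range, mem_image]
  omega

lemma card_shiftSet (d : ℕ) (A : Finset ℕ) : #(shiftSet d A) = d + #A := by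
  rw [shiftSet, card_union_of_disjoint (disjoint_range_image_add d A), card_range,
    card_image_of_injective _ (add_left_injective d)]

lemma sum_shiftSet (d : ℕ) (A : Finset ℕ) :
    ∑ x ∈ shiftSet d A, x = ∑ i ∈ range d, i + (∑ a ∈ A, a + d * #A) := by
  rw [shiftSet, sum_union (disjoint_range_image_add d A),
    sum_image fun _ _ _ _ ↦ (add_left_injective d ·), sum_add_distrib, sum_const, smul_eq_mul,
    mul_comm]

lemma shiftSet_range (d k : ℕ) : shiftSet d (range k) = range (d + k) := by
  ext x
  simp only [shiftSet, mem_union, mem_image, mem_range]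
  refine ⟨by rintro (h | ⟨a, ha, rfl⟩) <;> omega, fun h ↦ ?_⟩
  exact (lt_or_ge x d).imp id fun h' ↦ ⟨x - d, by omega, by omega⟩

-- The elements of `A` outside `range #A` are `≥ #A`; exactly as many elements `< #A` are missing.
lemma sum_range_card_add_card_sdiff_le (A : Finset ℕ) :
    ∑ i ∈ range #A, i + #(A \ range #A) ≤ ∑ a ∈ A, a := by
  set R := range #A
  have hcard : #(R \ A) = #(A \ R) := card_sdiff_comm (card_range _)
  have hout : #(A \ R) * #A ≤ ∑ a ∈ A \ R, a := by
    simpa using card_nsmul_le_sum (A \ R) id #A (by simp [R])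
  have hin : ∑ i ∈ R \ A, (i + 1) ≤ #(R \ A) * #A := by
    simpa using sum_le_card_nsmul (R \ A) (· + 1) #A (by simp [R]; omega)
  rw [sum_add_distrib, sum_const, smul_eq_mul, mul_one, hcard] at hin
  rw [← sum_inter_add_sum_sdiff A R, ← sum_inter_add_sum_sdiff R A, inter_comm]
  omega

lemma four_mul_sq_ediv_four_add_sq_ediv_four {x y : ℤ} (h : Odd (x + y)) :
    4 * (x ^ 2 / 4 + y ^ 2 / 4) = x ^ 2 + y ^ 2 - 1 := by
  rw [Int.odd_iff] at h
  obtain ⟨k, rfl | rfl⟩ := Int.even_or_odd' x <;> obtain ⟨l, rfl | rfl⟩ := Int.even_or_odd' y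
  · omega
  · rw [show (2 * k) ^ 2 = 4 * k ^ 2 by ring, show (2 * l + 1) ^ 2 = 4 * (l ^ 2 + l) + 1 by ring]
    omega
  · rw [show (2 * l) ^ 2 = 4 * l ^ 2 by ring, show (2 * k + 1) ^ 2 = 4 * (k ^ 2 + k) + 1 by ring]
    omega
  · omega

lemma cast_sum_range_id_mul_two (n : ℕ) : ((∑ i ∈ range n, i : ℕ) : ℤ) * 2 = n * (n - 1) := by
  have := congrArg (Nat.cast : ℕ → ℤ) (sum_range_id_mul_two n)
  rcases n with _ | n
  · simp
  · push_cast at this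
    simpa using this

lemma sum_range_id_add_sum_range_id (a b : ℕ) :
    ((∑ i ∈ range a, i : ℕ) : ℤ) + ((∑ i ∈ range b, i : ℕ) : ℤ) =
      ((a : ℤ) + b - 1) ^ 2 / 4 + ((a : ℤ) - b) ^ 2 / 4 := by
  have hodd : Odd (((a : ℤ) + b - 1) + ((a : ℤ) - b)) := ⟨a - 1, by ring⟩
  refine mul_left_cancel₀ (four_ne_zero (α := ℤ)) ?_
  linear_combination 2 * cast_sum_range_id_mul_two a + 2 * cast_sum_range_id_mul_two b -
    four_mul_sq_ediv_four_add_sq_ediv_four hodd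

/-- The size of the partition whose beta-set is `A`. -/
def betaSetSize (A : Finset ℕ) : ℤ := ((∑ a ∈ A, a : ℕ) : ℤ) - ((∑ i ∈ range #A, i : ℕ) : ℤ)

lemma betaSetSize_nonneg (A : Finset ℕ) : 0 ≤ betaSetSize A := by
  have := sum_range_card_add_card_sdiff_le A
  rw [betaSetSize, sub_nonneg]
  exact_mod_cast (Nat.le_add_right _ _).trans this

lemma betaSetSize_eq_zero_iff {A : Finset ℕ} : betaSetSize A = 0 ↔ A = range #A := by
  refine ⟨fun h ↦ ?_, fun h ↦ by rw [betaSetSize, ← h, sub_self]⟩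
  have hle := sum_range_card_add_card_sdiff_le A
  have : #(A \ range #A) = 0 := by rw [betaSetSize, sub_eq_zero] at h; omega
  exact eq_of_subset_of_card_le (sdiff_eq_empty_iff_subset.1 (card_eq_zero.1 this))
    (card_range _).le

lemma betaSetSize_shiftSet (d : ℕ) (A : Finset ℕ) : betaSetSize (shiftSet d A) = betaSetSize A := by
  rw [betaSetSize, betaSetSize, sum_shiftSet, card_shiftSet, sum_range_add, sum_add_distrib,
    sum_const, card_range, smul_eq_mul]
  push_cast
  ring

lemma symbolRank_eq_betaSetSize_add (Λ : LSymbol) :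
    symbolRank Λ = betaSetSize Λ.1 + betaSetSize Λ.2 + symbolDefect Λ ^ 2 / 4 := by
  have := sum_range_id_add_sum_range_id #Λ.1 #Λ.2
  rw [symbolRank, betaSetSize, betaSetSize, symbolDefect]
  linear_combination this

lemma symbolDefect_dShift (d : ℕ) (Λ : LSymbol) : symbolDefect (dShift d Λ) = symbolDefect Λ := by
  simp only [symbolDefect, dShift, card_shiftSet]
  push_cast
  ring

lemma symbolRank_dShift (d : ℕ) (Λ : LSymbol) : symbolRank (dShift d Λ) = symbolRank Λ := by
  rw [symbolRank_eq_betaSetSize_add, symbolRank_eq_betaSetSize_add, symbolDefect_dShift]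
  simp only [dShift, betaSetSize_shiftSet]

lemma SymbolEquiv.apply_eq {α : Sort*} {f : LSymbol → α} (hf : ∀ d Λ, f (dShift d Λ) = f Λ)
    {Λ Λ' : LSymbol} (h : SymbolEquiv Λ Λ') : f Λ = f Λ' :=
  congrArg (Quot.lift f fun _ _ ⟨d, h⟩ ↦ h ▸ (hf d _).symm) (Quot.eqvGen_sound h)

lemma SymbolEquiv.cuspidal_iff {Λ Λ' : LSymbol} (h : SymbolEquiv Λ Λ') :
    symbolRank Λ = symbolDefect Λ ^ 2 / 4 ↔ symbolRank Λ' = symbolDefect Λ' ^ 2 / 4 := by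
  rw [h.apply_eq symbolRank_dShift, h.apply_eq symbolDefect_dShift]

lemma cuspidal_iff_eq_range {Λ : LSymbol} :
    symbolRank Λ = symbolDefect Λ ^ 2 / 4 ↔ Λ.1 = range #Λ.1 ∧ Λ.2 = range #Λ.2 := by
  have h₁ := betaSetSize_nonneg Λ.1
  have h₂ := betaSetSize_nonneg Λ.2
  rw [symbolRank_eq_betaSetSize_add, ← betaSetSize_eq_zero_iff, ← betaSetSize_eq_zero_iff]
  omega

lemma symbolEquiv_range_range (a b : ℕ) :
    SymbolEquiv (range a, range b) (range (a - b), range (b - a)) := by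
  refine .symm _ _ (.rel _ _ ⟨min a b, ?_⟩)
  simp only [dShift, shiftSet_range]
  congr 2 <;> omega

/-- A symbol is cuspidal iff it is equivalent to `(∅,∅)`, to
`({k,…,0}, ∅)` or to `(∅, {k,…,0})` for some `k ∈ ℕ`. -/
theorem symbol_cuspidal_iff (Λ : LSymbol) :
    symbolRank Λ = (symbolDefect Λ) ^ 2 / 4 ↔
      SymbolEquiv Λ (∅, ∅) ∨
      (∃ k : ℕ, SymbolEquiv Λ (Finset.range (k + 1), ∅)) ∨
      (∃ k : ℕ, SymbolEquiv Λ (∅, Finset.range (k + 1))) := by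
  constructor
  · obtain ⟨A, B⟩ := Λ
    rw [cuspidal_iff_eq_range]
    rintro ⟨hA, hB⟩
    have h := symbolEquiv_range_range #A #B
    rw [← hA, ← hB] at h
    rcases hab : #A - #B with _ | k <;> rcases hba : #B - #A with _ | l <;>
      simp only [hab, hba, range_zero] at h
    · exact .inl h
    · exact .inr (.inr ⟨l, h⟩)
    · exact .inr (.inl ⟨k, h⟩)
    · omega
  · rintro (h | ⟨k, h⟩ | ⟨k, h⟩) <;>
      rw [h.cuspidal_iff, cuspidal_iff_eq_range] <;> simp

end
end
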